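/- arXiv:1310.3649 — 3 statements merged into one kernel-verified Lean document; each statement's English description precedes it below -/
import Mathlib

section
/- For every H with 0 < H < 1/2 and all u, v ≥ 0, (1+u)^{2H} + (1+v)^{2H} - (1+u+v)^{2H} - 1 ≤ 2H·u. -/
/-- For `0 < H < 1/2` and `u, v ≥ 0`,
`(1+u)^(2H) + (1+v)^(2H) - (1+u+v)^(2H) - 1 ≤ 2H·u`. -/
theorem taylor_bound_u (H u v : ℝ) (hH0 : 0 < H) (hH : H < 1 / 2)
    (hu : 0 ≤ u) (hv : 0 ≤ v) :
    (1 + u) ^ (2 * H) + (1 + v) ^ (2 * H) - (1 + u + v) ^ (2 * H) - 1 ≤ 2 * H * u := by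
  have h1 : (1 + u) ^ (2 * H) ≤ 1 + 2 * H * u := by
    have := rpow_one_add_le_one_add_mul_self (s := u) (by linarith) (p := 2 * H)
      (by linarith) (by linarith)
    linarith [this]
  have h2 : (1 + v) ^ (2 * H) ≤ (1 + u + v) ^ (2 * H) :=
    Real.rpow_le_rpow (by linarith) (by linarith) (by linarith)
  linarith
end

section
/- Let 0 < H < 1/2 and 0 < t₁ < t₂ < t₃ < t₄, and set Δtᵢ = tᵢ - t_{i-1}. Define a = ((Δt₄+Δt₃)^{2H} + (Δt₃+Δt₂)^{2H} - (Δt₄+Δt₃+Δt₂)^{2H} - (Δt₃)^{2H})/2, the negative of the covariance of the fBm increments B^H(t₄)-B^H(t₃) and B^H(t₂)-B^H(t₁). Then |2a| ≤ 2H · (Δt₂/Δt₃)^{1/2-H} · (Δt₄/Δt₃)^{1/2-H} · (Δt₂)^H · (Δt₄)^H. -/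
open Real

lemma bern {v u p : ℝ} (hv : 0 < v) (hu : 0 ≤ u) (hp0 : 0 ≤ p) (hp1 : p ≤ 1) :
    (v + u) ^ p ≤ v ^ p + p * u * v ^ (p - 1) := by
  have h1 : (v + u) ^ p = v ^ p * (1 + u / v) ^ p := by
    rw [← Real.mul_rpow hv.le (by positivity)]
    congr 1; field_simp
  have h2 : (1 + u / v) ^ p ≤ 1 + p * (u / v) :=
    rpow_one_add_le_one_add_mul_self (by nlinarith [div_nonneg hu hv.le]) hp0 hp1
  have h3 : v ^ (p - 1) = v ^ p / v := by
    rw [Real.rpow_sub hv, Real.rpow_one]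
  rw [h1, h3]
  calc v ^ p * (1 + u / v) ^ p ≤ v ^ p * (1 + p * (u / v)) := by
        apply mul_le_mul_of_nonneg_left h2 (by positivity)
    _ = v ^ p + p * u * (v ^ p / v) := by field_simp

lemma conc4 {v u w p : ℝ} (hv : 0 < v) (hu : 0 < u) (hw : 0 < w) (hp0 : 0 ≤ p) (hp1 : p ≤ 1) :
    (v + u + w) ^ p + v ^ p ≤ (v + u) ^ p + (v + w) ^ p := by
  have hc := Real.concaveOn_rpow hp0 hp1
  have huw : 0 < u + w := by linarith
  have hlm : w / (u + w) + u / (u + w) = 1 := by field_simp; ring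
  have hl0 : 0 ≤ w / (u + w) := by positivity
  have hm0 : 0 ≤ u / (u + w) := by positivity
  have hb : (w / (u + w)) * v + (u / (u + w)) * (v + u + w) = v + u := by
    field_simp; ring
  have hc' : (u / (u + w)) * v + (w / (u + w)) * (v + u + w) = v + w := by
    field_simp; ring
  have H1 := hc.2 (Set.mem_Ici.2 hv.le) (Set.mem_Ici.2 (by linarith : (0:ℝ) ≤ v + u + w)) hl0 hm0 hlm
  have H2 := hc.2 (Set.mem_Ici.2 hv.le) (Set.mem_Ici.2 (by linarith : (0:ℝ) ≤ v + u + w)) hm0 hl0 (by linarith)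
  simp only [smul_eq_mul] at H1 H2
  rw [hb] at H1
  rw [hc'] at H2
  have key : v ^ p + (v + u + w) ^ p
      = ((w / (u + w)) * v ^ p + (u / (u + w)) * (v + u + w) ^ p)
        + ((u / (u + w)) * v ^ p + (w / (u + w)) * (v + u + w) ^ p) := by
    field_simp
    ring
  linarith [add_le_add H1 H2]


/-- Covariance bound (part (i) of Lemma 2.3): for `0 < H < 1/2` and
`0 < t₁ < t₂ < t₃ < t₄`, with `Δtᵢ = tᵢ - t_{i-1}`, the absolute value of the covariance
of the fBm increments satisfies
`|2a| ≤ 2H (Δt₂/Δt₃)^(1/2-H) (Δt₄/Δt₃)^(1/2-H) Δt₂^H Δt₄^H`. -/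
theorem fbm_cov_bound_i (H t₁ t₂ t₃ t₄ : ℝ) (hH0 : 0 < H) (hH : H < 1 / 2)
    (h1 : 0 < t₁) (h12 : t₁ < t₂) (h23 : t₂ < t₃) (h34 : t₃ < t₄) :
    |((t₄ - t₃) + (t₃ - t₂)) ^ (2 * H) + ((t₃ - t₂) + (t₂ - t₁)) ^ (2 * H)
        - ((t₄ - t₃) + (t₃ - t₂) + (t₂ - t₁)) ^ (2 * H) - (t₃ - t₂) ^ (2 * H)|
      ≤ 2 * H * ((t₂ - t₁) / (t₃ - t₂)) ^ (1 / 2 - H) * ((t₄ - t₃) / (t₃ - t₂)) ^ (1 / 2 - H)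
        * (t₂ - t₁) ^ H * (t₄ - t₃) ^ H := by
  set u := t₂ - t₁ with hu'
  set v := t₃ - t₂ with hv'
  set w := t₄ - t₃ with hw'
  have hu : 0 < u := by simp [hu']; linarith
  have hv : 0 < v := by simp [hv']; linarith
  have hw : 0 < w := by simp [hw']; linarith
  have hp0 : (0:ℝ) < 2 * H := by linarith
  have hp1 : 2 * H ≤ 1 := by linarith
  have e0 : w + v = v + w := by ring
  have e1 : v + w + u = v + u + w := by ring
  rw [e0, e1]
  have hE0 : 0 ≤ (v + w) ^ (2*H) + (v + u) ^ (2*H) - (v + u + w) ^ (2*H) - v ^ (2*H) := by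
    have := conc4 hv hu hw hp0.le hp1
    linarith
  rw [show (2:ℝ) * H = 2 * H from rfl, abs_of_nonneg hE0]
  -- upper bounds via Bernoulli
  have B1 : (v + u) ^ (2*H) ≤ v ^ (2*H) + (2*H) * u * v ^ (2*H - 1) := bern hv hu.le hp0.le hp1
  have B2 : (v + w) ^ (2*H) ≤ v ^ (2*H) + (2*H) * w * v ^ (2*H - 1) := bern hv hw.le hp0.le hp1
  have M1 : (v + w) ^ (2*H) ≤ (v + u + w) ^ (2*H) :=
    Real.rpow_le_rpow (by linarith) (by linarith) hp0.le
  have M2 : (v + u) ^ (2*H) ≤ (v + u + w) ^ (2*H) :=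
    Real.rpow_le_rpow (by linarith) (by linarith) hp0.le
  have hvp : 0 < v ^ (2*H - 1) := Real.rpow_pos_of_pos hv _
  have Eu : (v + w) ^ (2*H) + (v + u) ^ (2*H) - (v + u + w) ^ (2*H) - v ^ (2*H)
      ≤ 2*H * u * v ^ (2*H - 1) := by linarith
  have Ew : (v + w) ^ (2*H) + (v + u) ^ (2*H) - (v + u + w) ^ (2*H) - v ^ (2*H)
      ≤ 2*H * w * v ^ (2*H - 1) := by linarith
  -- min(u,w) ≤ √u √w
  have hu2 : u ^ ((1:ℝ)/2) * u ^ ((1:ℝ)/2) = u := by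
    rw [← Real.rpow_add hu]; norm_num
  have hw2 : w ^ ((1:ℝ)/2) * w ^ ((1:ℝ)/2) = w := by
    rw [← Real.rpow_add hw]; norm_num
  have hmin : min u w ≤ u ^ ((1:ℝ)/2) * w ^ ((1:ℝ)/2) := by
    rcases le_total u w with h | h
    · calc min u w = u := min_eq_left h
        _ = u ^ ((1:ℝ)/2) * u ^ ((1:ℝ)/2) := hu2.symm
        _ ≤ u ^ ((1:ℝ)/2) * w ^ ((1:ℝ)/2) := by
            apply mul_le_mul_of_nonneg_left (Real.rpow_le_rpow hu.le h (by norm_num))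
              (Real.rpow_nonneg hu.le _)
    · calc min u w = w := min_eq_right h
        _ = w ^ ((1:ℝ)/2) * w ^ ((1:ℝ)/2) := hw2.symm
        _ ≤ u ^ ((1:ℝ)/2) * w ^ ((1:ℝ)/2) := by
            apply mul_le_mul_of_nonneg_right (Real.rpow_le_rpow hw.le h (by norm_num))
              (Real.rpow_nonneg hw.le _)
  have Emin : (v + w) ^ (2*H) + (v + u) ^ (2*H) - (v + u + w) ^ (2*H) - v ^ (2*H)
      ≤ 2*H * (u ^ ((1:ℝ)/2) * w ^ ((1:ℝ)/2)) * v ^ (2*H - 1) := by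
    rcases le_total u w with h | h
    · calc _ ≤ 2*H * u * v ^ (2*H-1) := Eu
        _ = 2*H * (min u w) * v ^ (2*H-1) := by rw [min_eq_left h]
        _ ≤ _ := by
            apply mul_le_mul_of_nonneg_right _ hvp.le
            apply mul_le_mul_of_nonneg_left hmin (by linarith)
    · calc _ ≤ 2*H * w * v ^ (2*H-1) := Ew
        _ = 2*H * (min u w) * v ^ (2*H-1) := by rw [min_eq_right h]
        _ ≤ _ := by
            apply mul_le_mul_of_nonneg_right _ hvp.le
            apply mul_le_mul_of_nonneg_left hmin (by linarith)
  -- identify RHS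
  have hdiv : ∀ x : ℝ, 0 < x → (x / v) ^ (1/2 - H) = x ^ (1/2 - H) * v ^ (H - 1/2) := by
    intro x hx
    rw [div_eq_mul_inv, Real.mul_rpow hx.le (inv_nonneg.2 hv.le), Real.inv_rpow hv.le,
      ← Real.rpow_neg hv.le]
    congr 1
    ring
  have hu3 : u ^ ((1:ℝ)/2 - H) * u ^ H = u ^ ((1:ℝ)/2) := by
    rw [← Real.rpow_add hu]; norm_num
  have hw3 : w ^ ((1:ℝ)/2 - H) * w ^ H = w ^ ((1:ℝ)/2) := by
    rw [← Real.rpow_add hw]; norm_num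
  have hv3 : v ^ (H - (1:ℝ)/2) * v ^ (H - (1:ℝ)/2) = v ^ (2*H - 1) := by
    rw [← Real.rpow_add hv]; congr 1; ring
  have keyR : 2 * H * (u / v) ^ (1/2 - H) * (w / v) ^ (1/2 - H) * u ^ H * w ^ H
      = 2*H * (u ^ ((1:ℝ)/2) * w ^ ((1:ℝ)/2)) * v ^ (2*H - 1) := by
    rw [hdiv u hu, hdiv w hw, ← hu3, ← hw3, ← hv3]; ring
  rw [keyR]
  exact Emin
end

section
/- Let 0 < H < 1/2 and 0 < t₁ < t₂ < t₃ < t₄, with Δtᵢ = tᵢ - t_{i-1}. Then |(Δt₄+Δt₃)^{2H} + (Δt₃+Δt₂)^{2H} - (Δt₄+Δt₃+Δt₂)^{2H} - (Δt₃)^{2H}| ≤ 2·(min(Δt₂,Δt₄)/max(Δt₂,Δt₄))^H · (Δt₂)^H · (Δt₄)^H. -/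
open Real

private lemma rpow_subadd {p x y : ℝ} (hx : 0 ≤ x) (hy : 0 ≤ y) (hp : 0 ≤ p)
    (hp1 : p ≤ 1) : (x + y) ^ p ≤ x ^ p + y ^ p := by
  lift x to NNReal using hx
  lift y to NNReal using hy
  have := NNReal.rpow_add_le_add_rpow x y hp hp1
  exact_mod_cast this

/-- For concave rpow: f(b+a) + f(b+c) ≥ f(b) + f(a+b+c). -/
private lemma concave_ineq {p a b c : ℝ} (ha : 0 < a) (hb : 0 < b) (hc : 0 < c)
    (hp0 : 0 ≤ p) (hp1 : p ≤ 1) :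
    b ^ p + (a + b + c) ^ p ≤ (b + a) ^ p + (b + c) ^ p := by
  have hcf := Real.concaveOn_rpow hp0 hp1
  have hac : 0 < a + c := by linarith
  set lam := c / (a + c) with hlam
  set mu := a / (a + c) with hmu
  have hlam0 : 0 ≤ lam := by positivity
  have hmu0 : 0 ≤ mu := by positivity
  have hsum : lam + mu = 1 := by rw [hlam, hmu]; field_simp; ring
  have hmemb : (b : ℝ) ∈ Set.Ici (0:ℝ) := Set.mem_Ici.mpr hb.le
  have hmems : (a + b + c : ℝ) ∈ Set.Ici (0:ℝ) := Set.mem_Ici.mpr (by linarith)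
  have h1 : lam * b + mu * (a + b + c) = b + a := by
    rw [hlam, hmu]; field_simp; ring
  have h2 : mu * b + lam * (a + b + c) = b + c := by
    rw [hlam, hmu]; field_simp; ring
  have e1 := hcf.2 hmemb hmems hlam0 hmu0 hsum
  have e2 := hcf.2 hmemb hmems hmu0 hlam0 (by linarith)
  simp only [smul_eq_mul] at e1 e2
  rw [h1] at e1
  rw [h2] at e2
  have hb1 : lam * b ^ p + mu * b ^ p = b ^ p := by
    rw [← add_mul, hsum, one_mul]
  have hs1 : lam * (a + b + c) ^ p + mu * (a + b + c) ^ p = (a + b + c) ^ p := by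
    rw [← add_mul, hsum, one_mul]
  linarith

/-- Covariance bound (part (ii) of Lemma 2.3, Kôno): for `0 < H < 1/2` and
`0 < t₁ < t₂ < t₃ < t₄`, with `Δtᵢ = tᵢ - t_{i-1}`,
`|(Δt₄+Δt₃)^(2H) + (Δt₃+Δt₂)^(2H) - (Δt₄+Δt₃+Δt₂)^(2H) - Δt₃^(2H)|
  ≤ 2 (min(Δt₂,Δt₄)/max(Δt₂,Δt₄))^H Δt₂^H Δt₄^H`. -/
theorem fbm_cov_bound_ii (H t₁ t₂ t₃ t₄ : ℝ) (hH0 : 0 < H) (hH : H < 1 / 2)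
    (h1 : 0 < t₁) (h12 : t₁ < t₂) (h23 : t₂ < t₃) (h34 : t₃ < t₄) :
    |((t₄ - t₃) + (t₃ - t₂)) ^ (2 * H) + ((t₃ - t₂) + (t₂ - t₁)) ^ (2 * H)
        - ((t₄ - t₃) + (t₃ - t₂) + (t₂ - t₁)) ^ (2 * H) - (t₃ - t₂) ^ (2 * H)|
      ≤ 2 * (min (t₂ - t₁) (t₄ - t₃) / max (t₂ - t₁) (t₄ - t₃)) ^ H
        * (t₂ - t₁) ^ H * (t₄ - t₃) ^ H := by
  set a := t₂ - t₁ with ha'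
  set b := t₃ - t₂ with hb'
  set c := t₄ - t₃ with hc'
  have ha : 0 < a := by rw [ha']; linarith
  have hb : 0 < b := by rw [hb']; linarith
  have hc : 0 < c := by rw [hc']; linarith
  set p := 2 * H with hp'
  have hp0 : 0 < p := by positivity
  have hp1 : p ≤ 1 := by rw [hp']; linarith
  -- RHS equals 2 * (min a c)^p
  have hrhs : 2 * (min a c / max a c) ^ H * a ^ H * c ^ H = 2 * (min a c) ^ p := by
    rcases le_total a c with h | h
    · rw [min_eq_left h, max_eq_right h, Real.div_rpow ha.le hc.le,
        show a ^ p = a ^ H * a ^ H by rw [hp', two_mul, Real.rpow_add ha]]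
      have hcH : c ^ H ≠ 0 := by positivity
      field_simp
    · rw [min_eq_right h, max_eq_left h, Real.div_rpow hc.le ha.le,
        show c ^ p = c ^ H * c ^ H by rw [hp', two_mul, Real.rpow_add hc]]
      have haH : a ^ H ≠ 0 := by positivity
      field_simp
  rw [hrhs]
  -- the core inequality
  have hE0 : 0 ≤ (c + b) ^ p + (b + a) ^ p - (c + b + a) ^ p - b ^ p := by
    have key := concave_ineq ha hb hc hp0.le hp1
    rw [show c + b + a = a + b + c by ring, show c + b = b + c by ring]
    linarith
  have hEa : (c + b) ^ p + (b + a) ^ p - (c + b + a) ^ p - b ^ p ≤ a ^ p := by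
    have hsub : (b + a) ^ p ≤ b ^ p + a ^ p := rpow_subadd hb.le ha.le hp0.le hp1
    have hmono : (c + b) ^ p ≤ (c + b + a) ^ p :=
      Real.rpow_le_rpow (by linarith) (by linarith) hp0.le
    linarith
  have hEc : (c + b) ^ p + (b + a) ^ p - (c + b + a) ^ p - b ^ p ≤ c ^ p := by
    have hsub : (c + b) ^ p ≤ c ^ p + b ^ p := rpow_subadd hc.le hb.le hp0.le hp1
    have hmono : (b + a) ^ p ≤ (c + b + a) ^ p :=
      Real.rpow_le_rpow (by linarith) (by linarith) hp0.le
    linarith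
  have hminpos : 0 < min a c := lt_min ha hc
  have hmin : (min a c) ^ p = min (a ^ p) (c ^ p) := by
    rcases le_total a c with h | h
    · rw [min_eq_left h, min_eq_left (Real.rpow_le_rpow ha.le h hp0.le)]
    · rw [min_eq_right h, min_eq_right (Real.rpow_le_rpow hc.le h hp0.le)]
  rw [abs_of_nonneg hE0]
  have hle : (c + b) ^ p + (b + a) ^ p - (c + b + a) ^ p - b ^ p ≤ (min a c) ^ p := by
    rw [hmin]
    exact le_min hEa hEc
  have : (0:ℝ) ≤ (min a c) ^ p := Real.rpow_nonneg hminpos.le _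
  linarith
end
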